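/- Let E and P be normed vector spaces, K ≥ 0, and let G : E → P → E satisfy ‖G(x)(p) − G(y)(q)‖ ≤ K(‖x − y‖ + ‖p − q‖) for all x, y ∈ E and p, q ∈ P. Let T > 0, x₁, x₂ ∈ E, p₁, p₂ ∈ P, and let w₁, w₂ : ℝ → E be continuous functions satisfying the integral equations w_i(t) = x_i + ∫_0^t G(w_i(s))(p_i) ds for all t ∈ [0,T], i = 1, 2. Then for every t ∈ [0,T], ‖w₁(t) − w₂(t)‖ ≤ e^{Kt} (‖x₁ − x₂‖ + K·T·‖p₁ − p₂‖). In particular, solutions depend Lipschitz-continuously on the initial condition and on the parameter. -/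

import Mathlib

/-!
Both solutions are differentiable from the right, with derivatives `G (wᵢ t) pᵢ`. Viewing `w₂` as
an approximate solution of the ODE `w' = G w p₁`, with defect at most `K ‖p₁ - p₂‖`, Grönwall's
inequality for approximate trajectories bounds `‖w₁ t - w₂ t‖` by
`‖x₁ - x₂‖ e^{Kt} + ‖p₁ - p₂‖ (e^{Kt} - 1)`, and `e^{Kt} - 1 ≤ Kt e^{Kt} ≤ KT e^{Kt}`.
-/

open Set Real

theorem Real.exp_sub_one_le_mul_exp (y : ℝ) : exp y - 1 ≤ y * exp y := by
  have h := mul_le_mul_of_nonneg_right (one_sub_le_exp_neg y) (exp_pos y).le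
  rw [← exp_add, neg_add_cancel, exp_zero] at h
  linarith

theorem gronwallBound_mul_le {δ K ε x : ℝ} (hK : 0 ≤ K) (hε : 0 ≤ ε) :
    gronwallBound δ K (K * ε) x ≤ exp (K * x) * (δ + K * x * ε) := by
  rcases hK.eq_or_lt with rfl | hKpos
  · simp [gronwallBound_K0]
  · rw [gronwallBound_of_K_ne_0 hKpos.ne', mul_div_cancel_left₀ ε hKpos.ne']
    have := mul_le_mul_of_nonneg_left (exp_sub_one_le_mul_exp (K * x)) hε
    linarith

theorem hasDerivWithinAt_Ici_of_eq_add_integral {E : Type*} [NormedAddCommGroup E]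
    [NormedSpace ℝ E] [CompleteSpace E] {g w : ℝ → E} {x : E} {a b t : ℝ} (hg : Continuous g)
    (hw : ∀ s ∈ Icc a b, w s = x + ∫ r in a..s, g r) (ht : t ∈ Ico a b) :
    HasDerivWithinAt w (g t) (Ici t) t := by
  have hderiv : HasDerivWithinAt (fun s => x + ∫ r in a..s, g r) (g t) (Ici t) t :=
    ((hg.integral_hasStrictDerivAt a t).hasDerivAt.const_add x).hasDerivWithinAt
  refine hderiv.congr_of_eventuallyEq ?_ (hw t ⟨ht.1, ht.2.le⟩)
  exact Filter.mem_of_superset (Icc_mem_nhdsGE ht.2) fun s hs => hw s ⟨ht.1.trans hs.1, hs.2⟩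

theorem integral_equation_continuous_dependence_general
    {E P : Type*} [NormedAddCommGroup E] [NormedSpace ℝ E] [CompleteSpace E]
    [NormedAddCommGroup P]
    (K : ℝ) (hK : 0 ≤ K) (G : E → P → E)
    (hG : ∀ (x y : E) (p q : P), ‖G x p - G y q‖ ≤ K * (‖x - y‖ + ‖p - q‖))
    (T : ℝ) (x₁ x₂ : E) (p₁ p₂ : P)
    (w₁ w₂ : ℝ → E) (hw₁ : Continuous w₁) (hw₂ : Continuous w₂)
    (heq₁ : ∀ t ∈ Set.Icc (0 : ℝ) T, w₁ t = x₁ + ∫ s in (0 : ℝ)..t, G (w₁ s) p₁)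
    (heq₂ : ∀ t ∈ Set.Icc (0 : ℝ) T, w₂ t = x₂ + ∫ s in (0 : ℝ)..t, G (w₂ s) p₂) :
    ∀ t ∈ Set.Icc (0 : ℝ) T,
      ‖w₁ t - w₂ t‖ ≤ Real.exp (K * t) * (‖x₁ - x₂‖ + K * T * ‖p₁ - p₂‖) := by
  have hlip : ∀ p, LipschitzWith K.toNNReal fun x => G x p := fun p =>
    LipschitzWith.of_dist_le_mul fun x y => by
      simpa [dist_eq_norm, Real.coe_toNNReal K hK] using hG x y p p
  have hcont : ∀ p {w : ℝ → E}, Continuous w → Continuous fun t => G (w t) p :=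
    fun p _ hw => (hlip p).continuous.comp hw
  have hdefect : ∀ t ∈ Ico (0 : ℝ) T, dist (G (w₂ t) p₂) (G (w₂ t) p₁) ≤ K * ‖p₁ - p₂‖ :=
    fun t _ => by simpa [dist_eq_norm, norm_sub_rev p₁] using hG (w₂ t) (w₂ t) p₂ p₁
  intro t ht
  have h0 : (0 : ℝ) ∈ Icc 0 T := ⟨le_rfl, ht.1.trans ht.2⟩
  have hstart : dist (w₁ 0) (w₂ 0) ≤ ‖x₁ - x₂‖ := by
    simp [heq₁ 0 h0, heq₂ 0 h0, dist_eq_norm]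
  have hgronwall := dist_le_of_approx_trajectories_ODE (v := fun _ x => G x p₁) (fun _ => hlip p₁)
    hw₁.continuousOn (fun t ht => hasDerivWithinAt_Ici_of_eq_add_integral (hcont p₁ hw₁) heq₁ ht)
    (fun t _ => (dist_self _).le) hw₂.continuousOn
    (fun t ht => hasDerivWithinAt_Ici_of_eq_add_integral (hcont p₂ hw₂) heq₂ ht) hdefect hstart t ht
  calc ‖w₁ t - w₂ t‖ ≤ gronwallBound ‖x₁ - x₂‖ K (K * ‖p₁ - p₂‖) t := by
        simpa [dist_eq_norm, Real.coe_toNNReal K hK] using hgronwall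
    _ ≤ exp (K * t) * (‖x₁ - x₂‖ + K * t * ‖p₁ - p₂‖) := gronwallBound_mul_le hK (norm_nonneg _)
    _ ≤ exp (K * t) * (‖x₁ - x₂‖ + K * T * ‖p₁ - p₂‖) := by gcongr; exact ht.2

/-- solutions of a parameter-dependent integral equation depend
Lipschitz-continuously on the initial condition and on the parameter. -/
theorem integral_equation_continuous_dependence
    {E P : Type*} [NormedAddCommGroup E] [NormedSpace ℝ E] [CompleteSpace E]
    [NormedAddCommGroup P]
    (K : ℝ) (hK : 0 ≤ K) (G : E → P → E)
    (hG : ∀ (x y : E) (p q : P), ‖G x p - G y q‖ ≤ K * (‖x - y‖ + ‖p - q‖))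
    (T : ℝ) (hT : 0 < T) (x₁ x₂ : E) (p₁ p₂ : P)
    (w₁ w₂ : ℝ → E) (hw₁ : Continuous w₁) (hw₂ : Continuous w₂)
    (heq₁ : ∀ t ∈ Set.Icc (0 : ℝ) T, w₁ t = x₁ + ∫ s in (0 : ℝ)..t, G (w₁ s) p₁)
    (heq₂ : ∀ t ∈ Set.Icc (0 : ℝ) T, w₂ t = x₂ + ∫ s in (0 : ℝ)..t, G (w₂ s) p₂) :
    ∀ t ∈ Set.Icc (0 : ℝ) T,
      ‖w₁ t - w₂ t‖ ≤ Real.exp (K * t) * (‖x₁ - x₂‖ + K * T * ‖p₁ - p₂‖) :=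
  integral_equation_continuous_dependence_general K hK G hG T x₁ x₂ p₁ p₂ w₁ w₂ hw₁ hw₂ heq₁ heq₂
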